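/- arXiv:2210.11354 — 7 statements merged into one kernel-verified Lean document; each statement's English description precedes it below -/
import Mathlib

section
/- For every even integer n ≥ 2, the number a_{n+1} = (s_n^2 - s_n + 2)/4 is an odd integer, and for every odd integer n ≥ 3, the number a_{n+1} = (s_n^2 - 3 s_n + 4)/4 is an odd integer. -/
def sylvester : ℕ → ℕ
  | 0 => 2
  | n + 1 => sylvester n * (sylvester n - 1) + 1

lemma syl_step7 (n : ℕ) (h : sylvester n % 8 = 7) : sylvester (n + 1) % 8 = 3 := by
  obtain ⟨k, hk⟩ : ∃ k, sylvester n = 8 * k + 7 := ⟨sylvester n / 8, by omega⟩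
  have : sylvester (n + 1) = 8 * (8 * k ^ 2 + 13 * k + 5) + 3 := by
    show sylvester n * (sylvester n - 1) + 1 = _
    rw [hk]
    have : 8 * k + 7 - 1 = 8 * k + 6 := by omega
    rw [this]; ring
  omega

lemma syl_step3 (n : ℕ) (h : sylvester n % 8 = 3) : sylvester (n + 1) % 8 = 7 := by
  obtain ⟨k, hk⟩ : ∃ k, sylvester n = 8 * k + 3 := ⟨sylvester n / 8, by omega⟩
  have : sylvester (n + 1) = 8 * (8 * k ^ 2 + 5 * k) + 7 := by
    show sylvester n * (sylvester n - 1) + 1 = _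
    rw [hk]
    have : 8 * k + 3 - 1 = 8 * k + 2 := by omega
    rw [this]; ring
  omega

lemma syl_mod (k : ℕ) : sylvester (2 * k + 2) % 8 = 7 ∧ sylvester (2 * k + 3) % 8 = 3 := by
  induction k with
  | zero => exact ⟨by decide, by decide⟩
  | succ m ih =>
    have h1 : sylvester (2 * m + 4) % 8 = 7 := syl_step3 _ ih.2
    have h2 : sylvester (2 * m + 5) % 8 = 3 := syl_step7 _ h1
    constructor
    · have : 2 * (m + 1) + 2 = 2 * m + 4 := by ring
      rw [this]; exact h1
    · have : 2 * (m + 1) + 3 = 2 * m + 5 := by ring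
      rw [this]; exact h2

theorem weight_is_odd_integer (n : ℕ) :
    (2 ≤ n → Even n → ∃ A : ℤ, 4 * A = (sylvester n : ℤ) ^ 2 - (sylvester n : ℤ) + 2 ∧ Odd A) ∧
    (3 ≤ n → Odd n → ∃ A : ℤ, 4 * A = (sylvester n : ℤ) ^ 2 - 3 * (sylvester n : ℤ) + 4 ∧ Odd A) := by
  constructor
  · intro h2 heven
    obtain ⟨k, hk⟩ : ∃ k, n = 2 * k + 2 := by
      obtain ⟨j, hj⟩ := heven; exact ⟨j - 1, by omega⟩
    subst hk
    have h := (syl_mod k).1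
    obtain ⟨m, hm⟩ : ∃ m, sylvester (2 * k + 2) = 8 * m + 7 :=
      ⟨sylvester (2 * k + 2) / 8, by omega⟩
    refine ⟨16 * m ^ 2 + 26 * m + 11, ?_, ⟨8 * m ^ 2 + 13 * m + 5, by ring⟩⟩
    have : ((sylvester (2 * k + 2) : ℤ)) = 8 * m + 7 := by exact_mod_cast hm
    rw [this]; ring
  · intro h3 hodd
    obtain ⟨k, hk⟩ : ∃ k, n = 2 * k + 3 := by
      obtain ⟨j, hj⟩ := hodd; exact ⟨j - 1, by omega⟩
    subst hk
    have h := (syl_mod k).2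
    obtain ⟨m, hm⟩ : ∃ m, sylvester (2 * k + 3) = 8 * m + 3 :=
      ⟨sylvester (2 * k + 3) / 8, by omega⟩
    refine ⟨16 * m ^ 2 + 6 * m + 1, ?_, ⟨8 * m ^ 2 + 3 * m, by ring⟩⟩
    have : ((sylvester (2 * k + 3) : ℤ)) = 8 * m + 3 := by exact_mod_cast hm
    rw [this]; ring
end

section
/- Let n ≥ 2, let s = s_n be the n-th Sylvester number, let a_{n+1} = (s^2 - s + 2)/4 if n is even and a_{n+1} = (s^2 - 3s + 4)/4 if n is odd, let a_n = (s - 2) a_{n+1} + (s - 1), and let x = 1 + a_n + a_{n+1}. Then gcd(a_{n+1}, x) = 1. -/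
/-!
Since `x = s + (s - 1) a_{n+1}`, we have `gcd(a_{n+1}, x) = gcd(a_{n+1}, s)`. Modulo `s`,
`4 a_{n+1}` is `2` (n even) or `4` (n odd), and `s` is odd, so `a_{n+1}` is coprime to `s`.
-/

lemma sylvester_odd {n : ℕ} (hn : n ≠ 0) : Odd (sylvester n) := by
  obtain ⟨m, rfl⟩ := Nat.exists_eq_succ_of_ne_zero hn
  exact (Nat.even_mul_pred_self (sylvester m)).add_one

lemma isCoprime_of_mul_eq_add_mul {R : Type*} [CommRing R] {a s c k m : R}
    (hc : IsCoprime c s) (h : k * a = c + s * m) : IsCoprime a s :=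
  (h ▸ hc.add_mul_left_left m).of_mul_left_right

theorem gcd_top_weight_x (n : ℕ) (hn : 2 ≤ n) (A : ℤ)
    (hA : (Even n ∧ 4 * A = (sylvester n : ℤ) ^ 2 - (sylvester n : ℤ) + 2) ∨
          (Odd n ∧ 4 * A = (sylvester n : ℤ) ^ 2 - 3 * (sylvester n : ℤ) + 4)) :
    Int.gcd A (1 + (((sylvester n : ℤ) - 2) * A + ((sylvester n : ℤ) - 1)) + A) = 1 := by
  set s : ℤ := (sylvester n : ℤ)
  have h2s : IsCoprime 2 s :=
    Int.isCoprime_two_left.2 (Int.odd_coe_nat _ |>.2 (sylvester_odd (by omega)))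
  have hAs : IsCoprime A s := by
    rcases hA with ⟨-, h⟩ | ⟨-, h⟩
    · exact isCoprime_of_mul_eq_add_mul (k := 4) (m := s - 1) h2s (by linear_combination h)
    · exact isCoprime_of_mul_eq_add_mul (k := 4) (m := s - 3) (h2s.pow_left (m := 2))
        (by linear_combination h)
  rw [show 1 + ((s - 2) * A + (s - 1)) + A = s + (s - 1) * A by ring,
    Int.gcd_add_mul_right_right, ← Int.isCoprime_iff_gcd_eq_one]
  exact hAs
end

section
/- Let n ≥ 2, let s = s_n be the n-th Sylvester number, let a_{n+1} = (s^2 - s + 2)/4 if n is even and a_{n+1} = (s^2 - 3s + 4)/4 if n is odd, let a_n = (s - 2) a_{n+1} + (s - 1), and let x = 1 + a_n + a_{n+1}. Then gcd(a_n, x) = 1. -/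
theorem gcd_an_x (n : ℕ) (hn : 2 ≤ n) (A : ℤ)
    (hA : (Even n ∧ 4 * A = (sylvester n : ℤ) ^ 2 - (sylvester n : ℤ) + 2) ∨
          (Odd n ∧ 4 * A = (sylvester n : ℤ) ^ 2 - 3 * (sylvester n : ℤ) + 4)) :
    Int.gcd (((sylvester n : ℤ) - 2) * A + ((sylvester n : ℤ) - 1))
      (1 + (((sylvester n : ℤ) - 2) * A + ((sylvester n : ℤ) - 1)) + A) = 1 := by
  apply Int.isCoprime_iff_gcd_eq_one.mp
  exact ⟨(sylvester n : ℤ) - 1, -((sylvester n : ℤ) - 2), by ring⟩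
end

section
/- Let n ≥ 2, let s = s_n be the n-th Sylvester number, and let a_{n+1} = (s^2 - s + 2)/4 if n is even and a_{n+1} = (s^2 - 3s + 4)/4 if n is odd. Then gcd(a_{n+1}, s - 1) = 1. -/
lemma one_le_sylvester (n : ℕ) : 1 ≤ sylvester n := by
  cases n <;> simp [sylvester]

lemma sylvester_succ_cast {R : Type*} [CommRing R] (n : ℕ) :
    (sylvester (n + 1) : R) = sylvester n * (sylvester n - 1) + 1 := by
  rw [sylvester]
  push_cast [one_le_sylvester n]
  ring

lemma sylvester_cast_zmod_eight {n : ℕ} (hn : 1 ≤ n) :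
    (sylvester n : ZMod 8) = if Even n then 7 else 3 := by
  induction n, hn using Nat.le_induction with
  | base => decide
  | succ k _ ih =>
    rw [sylvester_succ_cast, ih]
    by_cases hk : Even k
    · simp only [hk, if_true, Nat.even_add_one, not_true, if_false]
      decide
    · simp only [hk, if_false, Nat.even_add_one, not_false_eq_true, if_true]
      decide

lemma odd_of_four_mul_cast_zmod_eight {A : ℤ} (h : ((4 * A : ℤ) : ZMod 8) = 4) : Odd A := by
  have h8 : ((8 : ℕ) : ℤ) ∣ 4 * A - 4 := by
    rw [← ZMod.intCast_zmod_eq_zero_iff_dvd]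
    push_cast at h ⊢
    rw [h, sub_self]
  rw [Int.odd_iff]
  omega

lemma isCoprime_of_dvd_four_mul_sub_two {A m : ℤ} (hA : Odd A) (hm : m ∣ 4 * A - 2) :
    IsCoprime A m := by
  obtain ⟨j, rfl⟩ := hA
  obtain ⟨k, hk⟩ := hm
  exact ⟨1 - 4 * j, k * j, by linear_combination -j * hk⟩

theorem gcd_top_weight_s_sub_one (n : ℕ) (hn : 2 ≤ n) (A : ℤ)
    (hA : (Even n ∧ 4 * A = (sylvester n : ℤ) ^ 2 - (sylvester n : ℤ) + 2) ∨
          (Odd n ∧ 4 * A = (sylvester n : ℤ) ^ 2 - 3 * (sylvester n : ℤ) + 4)) :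
    Int.gcd A ((sylvester n : ℤ) - 1) = 1 := by
  have hs := sylvester_cast_zmod_eight (by omega : 1 ≤ n)
  have hA_odd : Odd A := by
    apply odd_of_four_mul_cast_zmod_eight
    rcases hA with ⟨hn_even, h⟩ | ⟨hn_odd, h⟩
    · rw [h]
      push_cast
      rw [hs, if_pos hn_even]
      decide
    · rw [h]
      push_cast
      rw [hs, if_neg (Nat.not_even_iff_odd.mpr hn_odd)]
      decide
  have hdvd : (sylvester n : ℤ) - 1 ∣ 4 * A - 2 := by
    rcases hA with ⟨-, h⟩ | ⟨-, h⟩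
    · exact ⟨sylvester n, by linear_combination h⟩
    · exact ⟨sylvester n - 2, by linear_combination h⟩
  exact Int.isCoprime_iff_gcd_eq_one.mp (isCoprime_of_dvd_four_mul_sub_two hA_odd hdvd)
end

section
/- Let n ≥ 2 be an even integer, s = s_n, a_{n+1} = (s^2 - s + 2)/4, a_n = (s-2)a_{n+1} + (s-1), x = 1 + a_n + a_{n+1}, d = (s-1)x, and a_i = d/s_i for 0 ≤ i ≤ n-1. Then d - (a_0 + a_1 + ... + a_{n+1}) = 1. -/
lemma sylvester_ge_two (n : ℕ) : 2 ≤ sylvester n := by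
  induction n with
  | zero => norm_num [sylvester]
  | succ n ih =>
    have : 1 ≤ sylvester n - 1 := by omega
    have := Nat.mul_le_mul ih this
    simp [sylvester]; omega

lemma sylvester_sum (n : ℕ) :
    ∑ i ∈ Finset.range n, (1 : ℚ) / (sylvester i : ℚ)
      = 1 - 1 / ((sylvester n : ℚ) - 1) := by
  induction n with
  | zero => norm_num [sylvester]
  | succ n ih =>
    have h2 : 2 ≤ sylvester n := sylvester_ge_two n
    have hcast : (sylvester (n+1) : ℚ) = (sylvester n : ℚ) * ((sylvester n : ℚ) - 1) + 1 := by
      have : sylvester (n+1) = sylvester n * (sylvester n - 1) + 1 := rfl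
      rw [this]
      push_cast [Nat.cast_sub (by omega : 1 ≤ sylvester n)]
      ring
    have hs : (sylvester n : ℚ) ≠ 0 := by
      have : (2:ℚ) ≤ (sylvester n : ℚ) := by exact_mod_cast h2
      linarith
    have hs1 : (sylvester n : ℚ) - 1 ≠ 0 := by
      have : (2:ℚ) ≤ (sylvester n : ℚ) := by exact_mod_cast h2
      intro h; linarith [sub_eq_zero.mp h]
    rw [Finset.sum_range_succ, ih, hcast]
    field_simp
    ring

theorem degree_minus_sum_weights_eq_one (n : ℕ) (hn : 2 ≤ n) (hne : Even n) :
    let s : ℚ := (sylvester n : ℚ)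
    let aTop : ℚ := (s ^ 2 - s + 2) / 4
    let aN : ℚ := (s - 2) * aTop + (s - 1)
    let x : ℚ := 1 + aN + aTop
    let d : ℚ := (s - 1) * x
    d - ((∑ i ∈ Finset.range n, d / (sylvester i : ℚ)) + aN + aTop) = 1 := by
  intro s aTop aN x d
  have h2 : 2 ≤ sylvester n := sylvester_ge_two n
  have hs1 : s - 1 ≠ 0 := by
    have : (2:ℚ) ≤ s := by unfold s; exact_mod_cast h2
    intro h; linarith [sub_eq_zero.mp h]
  have hsum : ∑ i ∈ Finset.range n, d / (sylvester i : ℚ)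
      = d * (1 - 1 / (s - 1)) := by
    rw [← sylvester_sum n, Finset.mul_sum]
    exact Finset.sum_congr rfl fun i _ => by rw [div_eq_mul_one_div]
  rw [hsum]
  have hd : d = (s - 1) * x := rfl
  have hx : x = 1 + aN + aTop := rfl
  rw [hd, hx]
  field_simp
  ring
end

section
/- Let n ≥ 2 be even, s = s_n, a_{n+1} = (s^2 - s + 2)/4, a_n = (s-2)a_{n+1} + (s-1), x = 1 + a_n + a_{n+1}, and d = (s-1)x. Then the volume V = 1/((s-1)^{n-2} x^{n-1} a_n a_{n+1}) satisfies V < 1/2^{2^n}. -/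
lemma sylvester_lb : ∀ n : ℕ, 2 ^ 2 ^ n + 1 ≤ sylvester (n + 1) := by
  intro n
  induction n with
  | zero => decide
  | succ k ih =>
    have hp : 1 ≤ 2 ^ 2 ^ k := Nat.one_le_two_pow
    have h2 : 1 ≤ sylvester (k + 1) := by omega
    show 2 ^ 2 ^ (k + 1) + 1 ≤ sylvester (k + 1) * (sylvester (k + 1) - 1) + 1
    have hA : 2 ^ 2 ^ k ≤ sylvester (k + 1) - 1 := by omega
    have : 2 ^ 2 ^ (k + 1) = 2 ^ 2 ^ k * 2 ^ 2 ^ k := by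
      rw [← pow_add]; congr 1; ring
    have hmul : 2 ^ 2 ^ k * 2 ^ 2 ^ k ≤ sylvester (k + 1) * (sylvester (k + 1) - 1) :=
      Nat.mul_le_mul (by omega) hA
    omega

theorem volume_lt_doubly_exponential (n : ℕ) (hn : 2 ≤ n) (hne : Even n) :
    let s : ℝ := (sylvester n : ℝ)
    let aTop : ℝ := (s ^ 2 - s + 2) / 4
    let aN : ℝ := (s - 2) * aTop + (s - 1)
    let x : ℝ := 1 + aN + aTop
    1 / ((s - 1) ^ (n - 2) * x ^ (n - 1) * aN * aTop) < 1 / 2 ^ (2 ^ n) := by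
  intro s aTop aN x
  obtain ⟨k, rfl⟩ : ∃ k, n = k + 2 := ⟨n - 2, by omega⟩
  have hsnat := sylvester_lb (k + 1)
  have hs : (2 : ℝ) ^ 2 ^ (k + 1) + 1 ≤ s := by
    have := (Nat.cast_le (α := ℝ)).mpr hsnat
    push_cast at this
    simpa [s] using this
  set M : ℝ := 2 ^ 2 ^ (k + 1) with hMdef
  have hM4 : (4 : ℝ) ≤ M := by
    have h2 : 2 ≤ 2 ^ (k + 1) := by
      calc 2 = 2 ^ 1 := by norm_num
      _ ≤ 2 ^ (k + 1) := Nat.pow_le_pow_right (by norm_num) (by omega)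
    calc (4 : ℝ) = 2 ^ 2 := by norm_num
    _ ≤ 2 ^ 2 ^ (k + 1) := by
        exact pow_le_pow_right₀ (by norm_num) h2
  have hP : (2 : ℝ) ^ 2 ^ (k + 2) = M ^ 2 := by
    rw [hMdef, ← pow_mul, show 2 ^ (k + 1) * 2 = 2 ^ (k + 2) from by ring]
  have hTop : M ^ 2 / 4 ≤ aTop := by
    have : M ^ 2 ≤ s ^ 2 - s + 2 := by nlinarith
    simp only [aTop]
    linarith
  have hTopPos : 0 < aTop := by nlinarith
  have haN : 3 * aTop ≤ aN := by
    simp only [aN]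
    nlinarith
  have haNPos : 0 < aN := by nlinarith
  have hx : 1 ≤ x := by simp only [x]; nlinarith
  have hAA : M ^ 2 / 4 * (M ^ 2 / 4) ≤ aTop * aTop :=
    mul_self_le_mul_self (by positivity) hTop
  have hM16 : 16 ≤ M * M := by nlinarith
  have hkey : M ^ 2 < aN * aTop := by
    nlinarith [hAA, hM16, mul_le_mul_of_nonneg_right haN hTopPos.le,
      mul_pos hTopPos hTopPos]
  have h1k : (1 : ℝ) ≤ (s - 1) ^ k := one_le_pow₀ (by nlinarith)
  have h1x : (1 : ℝ) ≤ x ^ (k + 2 - 1) := one_le_pow₀ hx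
  have hD : aN * aTop ≤ (s - 1) ^ k * x ^ (k + 2 - 1) * aN * aTop := by
    have h1 : (1 : ℝ) ≤ (s - 1) ^ k * x ^ (k + 2 - 1) := by nlinarith
    nlinarith [mul_pos haNPos hTopPos]
  have hfinal : (2 : ℝ) ^ 2 ^ (k + 2) < (s - 1) ^ (k + 2 - 2) * x ^ (k + 2 - 1) * aN * aTop := by
    rw [hP]
    have : (k + 2 - 2) = k := by omega
    rw [this]
    linarith
  exact one_div_lt_one_div_of_lt (by positivity) hfinal
end

section
/- For each even integer n ≥ 4 with s_n ≡ -1 (mod 8) and s_n ≡ -2 (mod 9), the numbers a_{n+1} = (20 s_n^2 - 295 s_n + 113)/36 and a_n = (20 s_n^2 - 55 s_n + 17)/36 are both odd integers, with a_{n+1} ≡ 0 (mod 3) and a_n ≡ -1 (mod 3), and neither is divisible by 5. -/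
theorem bottom_weight_fano_weights_integral (n : ℕ) (hn : 4 ≤ n) (hne : Even n)
    (h8 : (sylvester n : ℤ) % 8 = 7) (h9 : (sylvester n : ℤ) % 9 = 7) :
    ∃ A B : ℤ,
      36 * A = 20 * (sylvester n : ℤ) ^ 2 - 295 * (sylvester n : ℤ) + 113 ∧
      36 * B = 20 * (sylvester n : ℤ) ^ 2 - 55 * (sylvester n : ℤ) + 17 ∧
      Odd A ∧ Odd B ∧ A % 3 = 0 ∧ B % 3 = 2 ∧ ¬ (5 ∣ A) ∧ ¬ (5 ∣ B) := by
  set s : ℤ := (sylvester n : ℤ) with hs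
  obtain ⟨t, ht⟩ : ∃ t : ℤ, s = 72 * t + 7 := ⟨s / 72, by omega⟩
  obtain ⟨u, hu⟩ : ∃ u : ℤ, t ^ 2 = u := ⟨_, rfl⟩
  refine ⟨2880 * u - 30 * t - 27, 2880 * u + 450 * t + 17,
    by rw [ht, ← hu]; ring, by rw [ht, ← hu]; ring,
    ⟨1440 * u - 15 * t - 14, by ring⟩, ⟨1440 * u + 225 * t + 8, by ring⟩,
    by omega, by omega, ?_, ?_⟩
  · rintro ⟨c, hc⟩; omega
  · rintro ⟨c, hc⟩; omega
end
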